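/- Let P : ℝ⁴ → M₄(ℝ) be a smooth skew-symmetric matrix field of the block form P = [[M, 0], [0, J]] where M is a 2×2 skew-symmetric block depending on r, the off-diagonal 2×2 blocks vanish, and J = [[0, c],[-c, 0]] with c a nonzero constant. Assume P satisfies the Jacobi identity {{r_i, r_j}, r_k} + {{r_k, r_i}, r_j} + {{r_j, r_k}, r_i} = 0 for all i, j, k, where {f,g}(r) = (∇f(r))ᵀ P(r) ∇g(r). Then the entry P₁₂ = M₁₂ is independent of the variables r₃ and r₄, i.e. ∂M₁₂/∂r₃ = 0 and ∂M₁₂/∂r₄ = 0. -/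
import Mathlib


/-- The Poisson bracket of two functions on ℝ⁴ associated with a matrix field `P`:
`{f,g}(r) = (∇f(r))ᵀ P(r) ∇g(r)`. -/
noncomputable def poissonBracket (P : (Fin 4 → ℝ) → Matrix (Fin 4) (Fin 4) ℝ)
    (f g : (Fin 4 → ℝ) → ℝ) : (Fin 4 → ℝ) → ℝ :=
  fun r => ∑ i : Fin 4, ∑ j : Fin 4,
    fderiv ℝ f r (Pi.single i 1) * P r i j * fderiv ℝ g r (Pi.single j 1)

/-- The `i`-th coordinate function on ℝ⁴. -/
def coordFn (i : Fin 4) : (Fin 4 → ℝ) → ℝ := fun r => r i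

lemma fderiv_coord (a : Fin 4) (r v : Fin 4 → ℝ) :
    fderiv ℝ (coordFn a) r v = v a := by
  have h : coordFn a = ((ContinuousLinearMap.proj a : (Fin 4 → ℝ) →L[ℝ] ℝ) : (Fin 4 → ℝ) → ℝ) := rfl
  rw [h, ContinuousLinearMap.fderiv]
  rfl

lemma pb_coord (P : (Fin 4 → ℝ) → Matrix (Fin 4) (Fin 4) ℝ) (a b : Fin 4) (r : Fin 4 → ℝ) :
    poissonBracket P (coordFn a) (coordFn b) r = P r a b := by
  fin_cases a <;> fin_cases b <;>
    simp [poissonBracket, fderiv_coord, Pi.single_apply, Fin.sum_univ_four]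

lemma pb_zero (P : (Fin 4 → ℝ) → Matrix (Fin 4) (Fin 4) ℝ) (k : Fin 4) (r : Fin 4 → ℝ) :
    poissonBracket P (fun _ => (0:ℝ)) (coordFn k) r = 0 := by
  simp [poissonBracket]

theorem stmt0 (P : (Fin 4 → ℝ) → Matrix (Fin 4) (Fin 4) ℝ) (c : ℝ) (hc : c ≠ 0)
    (hPsmooth : ∀ i j, ContDiff ℝ (⊤ : ℕ∞) fun r => P r i j)
    (hskew : ∀ r i j, P r j i = -P r i j)
    (hblock : ∀ r, P r 0 2 = 0 ∧ P r 0 3 = 0 ∧ P r 1 2 = 0 ∧ P r 1 3 = 0)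
    (hJ : ∀ r, P r 2 3 = c)
    (hjacobi : ∀ i j k : Fin 4, ∀ r,
      poissonBracket P (poissonBracket P (coordFn i) (coordFn j)) (coordFn k) r
      + poissonBracket P (poissonBracket P (coordFn k) (coordFn i)) (coordFn j) r
      + poissonBracket P (poissonBracket P (coordFn j) (coordFn k)) (coordFn i) r = 0) :
    ∀ r, fderiv ℝ (fun s => P s 0 1) r (Pi.single 2 1) = 0 ∧
      fderiv ℝ (fun s => P s 0 1) r (Pi.single 3 1) = 0 := by
  intro r
  have P22 : ∀ s, P s 2 2 = 0 := fun s => by have := hskew s 2 2; linarith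
  have P33 : ∀ s, P s 3 3 = 0 := fun s => by have := hskew s 3 3; linarith
  have P32 : ∀ s, P s 3 2 = -c := fun s => by rw [hskew s 2 3, hJ]
  have hf01 : poissonBracket P (coordFn 0) (coordFn 1) = fun s => P s 0 1 :=
    funext fun s => pb_coord P 0 1 s
  constructor
  · -- use Jacobi at (0,1,3): coefficient c on ∂₂
    have h := hjacobi 0 1 3 r
    rw [hf01] at h
    have hB : poissonBracket P (coordFn 3) (coordFn 0) = fun _ => (0:ℝ) := by
      funext s; rw [pb_coord, hskew]; simp [(hblock s).2.1]
    have hC : poissonBracket P (coordFn 1) (coordFn 3) = fun _ => (0:ℝ) := by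
      funext s; rw [pb_coord]; exact (hblock s).2.2.2
    rw [hB, hC, pb_zero, pb_zero] at h
    simp only [poissonBracket, Fin.sum_univ_four, fderiv_coord] at h
    simp only [Pi.single_apply] at h
    norm_num at h
    rw [(hblock r).2.1, (hblock r).2.2.2, hJ r, P33 r] at h
    simp at h
    rcases h with h | h
    · exact h
    · exact absurd h hc
  · -- use Jacobi at (0,1,2): coefficient -c on ∂₃
    have h := hjacobi 0 1 2 r
    rw [hf01] at h
    have hB : poissonBracket P (coordFn 2) (coordFn 0) = fun _ => (0:ℝ) := by
      funext s; rw [pb_coord, hskew]; simp [(hblock s).1]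
    have hC : poissonBracket P (coordFn 1) (coordFn 2) = fun _ => (0:ℝ) := by
      funext s; rw [pb_coord]; exact (hblock s).2.2.1
    rw [hB, hC, pb_zero, pb_zero] at h
    simp only [poissonBracket, Fin.sum_univ_four, fderiv_coord] at h
    simp only [Pi.single_apply] at h
    norm_num at h
    rw [(hblock r).1, (hblock r).2.2.1, P22 r, P32 r] at h
    simp at h
    rcases h with h | h
    · exact h
    · exact absurd h hc
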